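/- arXiv:2306.04389 — 2 statements merged into one kernel-verified Lean document; each statement's English description precedes it below -/
import Mathlib

section
/- For the triple-jump composition, the unique real symmetric solution of γ₁ + γ₂ + γ₃ = 1 and γ₁^{p+1} + γ₂^{p+1} + γ₃^{p+1} = 0 with γ₁ = γ₃ and p an even positive integer is γ₁ = γ₃ = 1/(2 − 2^{1/(p+1)}), γ₂ = −2^{1/(p+1)}/(2 − 2^{1/(p+1)}). -/
/-- Triple-jump weights: the unique real symmetric solution of the composition conditions. -/
theorem stmt_6 (p : ℕ) (hp : Even p) (hp0 : 0 < p)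
    (γ1 γ2 γ3 : ℝ) (h13 : γ1 = γ3)
    (hsum : γ1 + γ2 + γ3 = 1)
    (hpow : γ1 ^ (p + 1) + γ2 ^ (p + 1) + γ3 ^ (p + 1) = 0) :
    γ1 = 1 / (2 - (2 : ℝ) ^ ((1 : ℝ) / (p + 1))) ∧
    γ2 = -((2 : ℝ) ^ ((1 : ℝ) / (p + 1))) / (2 - (2 : ℝ) ^ ((1 : ℝ) / (p + 1))) ∧
    γ3 = 1 / (2 - (2 : ℝ) ^ ((1 : ℝ) / (p + 1))) := by
  set c := (2 : ℝ) ^ ((1 : ℝ) / (p + 1)) with hc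
  have hodd : Odd (p + 1) := Even.add_one hp
  have hcpow : c ^ (p + 1) = 2 := by
    rw [hc, ← Real.rpow_natCast ((2 : ℝ) ^ ((1 : ℝ) / (p + 1))) (p + 1),
      ← Real.rpow_mul (by norm_num)]
    push_cast
    rw [one_div, inv_mul_cancel₀ (by positivity), Real.rpow_one]
  have hγ2 : γ2 = -c * γ1 := by
    have h1 : γ2 ^ (p + 1) = (-c * γ1) ^ (p + 1) := by
      have : (-c * γ1) ^ (p + 1) = -(c ^ (p + 1) * γ1 ^ (p + 1)) := by
        rw [neg_mul, hodd.neg_pow, mul_pow]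
      rw [this, hcpow]
      subst h13
      linarith
    have hinj : Function.Injective fun a : ℝ => a ^ (p + 1) :=
      hodd.strictMono_pow.injective
    exact hinj h1
  have hg : γ1 * (2 - c) = 1 := by subst h13; rw [hγ2] at hsum; ring_nf; ring_nf at hsum; linarith
  have hne : (2 - c) ≠ 0 := right_ne_zero_of_mul (hg ▸ one_ne_zero)
  have h1 : γ1 = 1 / (2 - c) := by field_simp; linarith [hg]
  refine ⟨h1, ?_, h13 ▸ h1⟩
  rw [hγ2, h1]
  field_simp
end

section
/- A symmetric one-step method has even order: if Φ_h is a one-step method satisfying Φ_h = Φ_{−h}^{−1} for all h and Φ_h(y) = φ_h(y) + C(y)h^{p+1} + O(h^{p+2}) with C ≢ 0 (φ the exact flow), then p is even. -/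
open Set Filter Metric Topology

lemma gron_aux {E : Type*} [NormedAddCommGroup E] [NormedSpace ℝ E]
    (w w' : ℝ → E) (h M b : ℝ) (hh : 0 < h) (hb : 0 < b) (hM : 0 < M)
    (hw : ∀ t, HasDerivAt w (w' t) t)
    (hbdd : ∀ t ∈ Icc (0:ℝ) h, ‖w t‖ ≤ 2 * b → ‖w' t‖ ≤ M * (2 * b))
    (h0 : ‖w 0‖ < b) (hMh : M * h ≤ 1 / 4) :
    ‖w h - w 0‖ ≤ M * (2 * b) * h := by
  have hwc : Continuous w := continuous_iff_continuousAt.2 fun t => (hw t).continuousAt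
  have key : ∀ t ∈ Icc (0:ℝ) h, ‖w t‖ ≤ 2 * b := by
    by_contra hcon
    push_neg at hcon
    obtain ⟨t₂, ht₂, ht₂b⟩ := hcon
    set B := Icc (0:ℝ) h ∩ {t | 2 * b ≤ ‖w t‖} with hBdef
    have hBne : B.Nonempty := ⟨t₂, ht₂, ht₂b.le⟩
    have hBclosed : IsClosed B :=
      isClosed_Icc.inter (isClosed_le continuous_const hwc.norm)
    have hBcomp : IsCompact B :=
      isCompact_Icc.of_isClosed_subset hBclosed inter_subset_left
    set t₁ := sInf B with ht₁def
    have ht₁B : t₁ ∈ B := hBcomp.sInf_mem hBne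
    obtain ⟨⟨ht₁0, ht₁h⟩, ht₁b⟩ := ht₁B
    have ht₁b' : 2 * b ≤ ‖w t₁‖ := ht₁b
    have ht₁pos : 0 < t₁ := by
      rcases ht₁0.lt_or_eq with h' | h'
      · exact h'
      · exfalso; rw [← h'] at ht₁b'; nlinarith
    have hsub : ∀ s ∈ Ico (0:ℝ) t₁, ‖w s‖ ≤ 2 * b := by
      intro s hs
      by_contra hs'
      push_neg at hs'
      have hmem : s ∈ B := ⟨⟨hs.1, hs.2.le.trans ht₁h⟩, hs'.le⟩
      exact absurd (csInf_le hBcomp.bddBelow hmem) (not_le.2 hs.2)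
    have hsub' : ∀ s ∈ Icc (0:ℝ) t₁, ‖w s‖ ≤ 2 * b := by
      intro s hs
      rcases hs.2.lt_or_eq with h' | h'
      · exact hsub s ⟨hs.1, h'⟩
      · rw [h']
        refine le_of_tendsto (f := fun u => ‖w u‖) (x := 𝓝[<] t₁)
          ((hwc.norm.tendsto t₁).mono_left nhdsWithin_le_nhds) ?_
        filter_upwards [Ioo_mem_nhdsLT ht₁pos] with u hu
        exact hsub u ⟨hu.1.le, hu.2⟩
    have hmvt : ‖w t₁ - w 0‖ ≤ M * (2 * b) * ‖t₁ - 0‖ :=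
      (convex_Icc (0:ℝ) t₁).norm_image_sub_le_of_norm_hasDerivWithin_le
        (fun s _ => (hw s).hasDerivWithinAt)
        (fun s hs => hbdd s ⟨hs.1, hs.2.trans ht₁h⟩ (hsub' s hs))
        ⟨le_refl 0, ht₁pos.le⟩ ⟨ht₁pos.le, le_refl t₁⟩
    have h1 : ‖t₁ - 0‖ = t₁ := by rw [sub_zero, Real.norm_eq_abs, abs_of_pos ht₁pos]
    rw [h1] at hmvt
    have h2 : ‖w t₁‖ ≤ ‖w 0‖ + M * (2 * b) * t₁ := by
      calc ‖w t₁‖ ≤ ‖w t₁ - w 0‖ + ‖w 0‖ := by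
            simpa using norm_add_le (w t₁ - w 0) (w 0)
        _ ≤ ‖w 0‖ + M * (2 * b) * t₁ := by linarith
    have h3 : M * (2 * b) * t₁ ≤ M * (2 * b) * h :=
      mul_le_mul_of_nonneg_left ht₁h (by positivity)
    nlinarith
  have hmvt2 : ‖w h - w 0‖ ≤ M * (2 * b) * ‖h - 0‖ :=
    (convex_Icc (0:ℝ) h).norm_image_sub_le_of_norm_hasDerivWithin_le
      (fun s _ => (hw s).hasDerivWithinAt)
      (fun s hs => hbdd s hs (key s hs))
      ⟨le_refl 0, hh.le⟩ ⟨hh.le, le_refl h⟩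
  rwa [sub_zero, Real.norm_eq_abs, abs_of_pos hh] at hmvt2

set_option maxHeartbeats 2000000

/-- A symmetric one-step method has even order. -/
theorem stmt_18 (n p : ℕ) (hp : 0 < p)
    (f : (Fin n → ℝ) → (Fin n → ℝ)) (hf : ContDiff ℝ (⊤ : ℕ∞) f)
    (φ Φ : ℝ → (Fin n → ℝ) → (Fin n → ℝ))
    (hφ0 : ∀ y, φ 0 y = y)
    (hφ : ∀ t y, HasDerivAt (fun s => φ s y) (f (φ t y)) t)
    (C : (Fin n → ℝ) → (Fin n → ℝ)) (hC : Continuous C) (hC0 : ∃ y, C y ≠ 0)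
    (herr : ∀ y, ∃ K δ, 0 < δ ∧ ∀ h z, |h| ≤ δ → ‖z - y‖ ≤ δ →
      ‖Φ h z - φ h z - h ^ (p + 1) • C z‖ ≤ K * |h| ^ (p + 2))
    (hsymm : ∀ h y, Φ h (Φ (-h) y) = y) :
    Even p := by
  by_contra hodd
  rw [Nat.not_even_iff_odd] at hodd
  have hpe : Even (p + 1) := Odd.add_one hodd
  obtain ⟨y₀, hy₀⟩ := hC0
  obtain ⟨K, δ, hδ, hest⟩ := herr y₀
  set K' := max K 0 with hK'def
  have hK0 : 0 ≤ K' := le_max_right _ _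
  have hest' : ∀ h z, |h| ≤ δ → ‖z - y₀‖ ≤ δ →
      ‖Φ h z - φ h z - h ^ (p + 1) • C z‖ ≤ K' * |h| ^ (p + 2) := by
    intro h z h1 h2
    exact (hest h z h1 h2).trans
      (mul_le_mul_of_nonneg_right (le_max_left _ _) (by positivity))
  -- Lipschitz constant on closed ball of radius 2
  obtain ⟨M₀, hM₀⟩ := (isCompact_closedBall y₀ 2).exists_bound_of_continuousOn
      ((hf.continuous_fderiv (by simp)).continuousOn)
  set M := max M₀ 1 with hMdef
  have hM1 : (1:ℝ) ≤ M := le_max_right _ _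
  have hMpos : (0:ℝ) < M := lt_of_lt_of_le one_pos hM1
  have hlip : ∀ x ∈ closedBall y₀ 2, ∀ y ∈ closedBall y₀ 2, ‖f x - f y‖ ≤ M * ‖x - y‖ := by
    intro x hx y hy
    exact (convex_closedBall y₀ 2).norm_image_sub_le_of_norm_fderiv_le
      (fun z _ => (hf.differentiable (by simp)).differentiableAt)
      (fun z hz => (hM₀ z hz).trans (le_max_left _ _)) hy hx
  -- continuity of the flow through y₀
  have hψ : Continuous fun t => φ t y₀ :=
    continuous_iff_continuousAt.2 fun t => (hφ t y₀).continuousAt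
  obtain ⟨τ, hτpos, hτ⟩ : ∃ τ > (0:ℝ), ∀ t : ℝ, |t| ≤ τ → ‖φ t y₀ - y₀‖ ≤ 1/2 := by
    have hcont : Filter.Tendsto (fun t => φ t y₀) (𝓝 0) (𝓝 y₀) := by
      have := hψ.tendsto 0
      rwa [hφ0] at this
    obtain ⟨τ, hτpos, hτ'⟩ := Metric.tendsto_nhds_nhds.1 hcont (1/2) (by norm_num)
    refine ⟨τ/2, half_pos hτpos, fun t ht => ?_⟩
    have : dist t 0 < τ := by
      rw [Real.dist_eq, sub_zero]; linarith
    have := hτ' this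
    rw [dist_eq_norm] at this
    exact this.le
  set c₂ : ℝ := ‖C y₀‖ + K' + 1 with hc₂def
  have hc₂pos : 0 < c₂ := by positivity
  set A : ℝ := 2 * K' + 2 * M * c₂ with hAdef
  set z : ℝ → (Fin n → ℝ) := fun h => Φ (-h) y₀ with hzdef
  set h₀ : ℝ := min 1 (min δ (min τ (min (1/(4*M)) (3/(4*c₂))))) with hh₀def
  have hh₀pos : 0 < h₀ := by
    simp only [hh₀def, lt_min_iff]
    refine ⟨one_pos, hδ, hτpos, by positivity, by positivity⟩
  -- the basic error estimate for the step -h from y₀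
  have he1 : ∀ h : ℝ, 0 < h → h ≤ h₀ →
      ‖z h - φ (-h) y₀ - (-h) ^ (p + 1) • C y₀‖ ≤ K' * h ^ (p + 2) := by
    intro h hh hhh
    have h1 : |(-h)| ≤ δ := by
      rw [abs_neg, abs_of_pos hh]
      calc h ≤ h₀ := hhh
        _ ≤ δ := le_trans (min_le_right _ _) (min_le_left _ _)
    have := hest' (-h) y₀ h1 (by simp [hδ.le])
    rwa [abs_neg, abs_of_pos hh] at this
  have hebound : ∀ h : ℝ, 0 < h → h ≤ h₀ → ‖z h - φ (-h) y₀‖ < c₂ * h ^ (p + 1) := by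
    intro h hh hhh
    have h1 := he1 h hh hhh
    have h2 : ‖z h - φ (-h) y₀‖ ≤ ‖(-h) ^ (p + 1) • C y₀‖ + K' * h ^ (p + 2) := by
      calc ‖z h - φ (-h) y₀‖
          ≤ ‖z h - φ (-h) y₀ - (-h) ^ (p + 1) • C y₀‖ + ‖(-h) ^ (p + 1) • C y₀‖ := by
            simpa using norm_add_le (z h - φ (-h) y₀ - (-h) ^ (p + 1) • C y₀)
              ((-h) ^ (p + 1) • C y₀)
        _ ≤ ‖(-h) ^ (p + 1) • C y₀‖ + K' * h ^ (p + 2) := by linarith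
    have h3 : ‖(-h) ^ (p + 1) • C y₀‖ = h ^ (p + 1) * ‖C y₀‖ := by
      rw [norm_smul, Real.norm_eq_abs, abs_pow, abs_neg, abs_of_pos hh]
    have hle1 : h ≤ 1 := hhh.trans (min_le_left _ _)
    have h4 : K' * h ^ (p + 2) ≤ K' * h ^ (p + 1) := by
      apply mul_le_mul_of_nonneg_left _ hK0
      calc h ^ (p + 2) = h ^ (p + 1) * h := by ring
        _ ≤ h ^ (p + 1) * 1 := by
            apply mul_le_mul_of_nonneg_left hle1 (by positivity)
        _ = h ^ (p + 1) := by ring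
    have hpow : (0:ℝ) < h ^ (p + 1) := by positivity
    calc ‖z h - φ (-h) y₀‖ ≤ h ^ (p + 1) * ‖C y₀‖ + K' * h ^ (p + 1) := by
          rw [h3] at h2; linarith
      _ < c₂ * h ^ (p + 1) := by rw [hc₂def]; nlinarith [norm_nonneg (C y₀)]
  -- z h tends to y₀
  have hz : Filter.Tendsto z (𝓝[>] (0:ℝ)) (𝓝 y₀) := by
    have hIoc : Ioc (0:ℝ) h₀ ∈ 𝓝[>] (0:ℝ) := Ioc_mem_nhdsGT_of_mem ⟨le_refl 0, hh₀pos⟩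
    have hd : Filter.Tendsto (fun h : ℝ => z h - φ (-h) y₀) (𝓝[>] (0:ℝ)) (𝓝 0) := by
      have hb : ∀ᶠ h : ℝ in 𝓝[>] (0:ℝ), ‖z h - φ (-h) y₀‖ ≤ c₂ * h := by
        filter_upwards [hIoc] with h hh
        have h1 := (hebound h hh.1 hh.2).le
        refine h1.trans ?_
        have h2 : h ^ (p + 1) ≤ h := by
          calc h ^ (p + 1) ≤ h ^ 1 :=
              pow_le_pow_of_le_one hh.1.le (hh.2.trans (min_le_left _ _)) (by omega)
            _ = h := pow_one h
        nlinarith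
      have hg : Filter.Tendsto (fun h : ℝ => c₂ * h) (𝓝[>] (0:ℝ)) (𝓝 0) := by
        have : Filter.Tendsto (fun h : ℝ => c₂ * h) (𝓝 0) (𝓝 (c₂ * 0)) :=
          (continuous_const.mul continuous_id).tendsto 0
        rw [mul_zero] at this
        exact this.mono_left nhdsWithin_le_nhds
      exact squeeze_zero_norm' hb hg
    have hflow : Filter.Tendsto (fun h : ℝ => φ (-h) y₀) (𝓝[>] (0:ℝ)) (𝓝 y₀) := by
      have h1 : Filter.Tendsto (fun h : ℝ => -h) (𝓝 (0:ℝ)) (𝓝 (0:ℝ)) := by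
        simpa using (continuous_neg.tendsto (0:ℝ))
      have h2 : Filter.Tendsto (fun t => φ t y₀) (𝓝 0) (𝓝 y₀) := by
        have := hψ.tendsto 0; rwa [hφ0] at this
      exact (h2.comp h1).mono_left nhdsWithin_le_nhds
    have := hflow.add hd
    rw [add_zero] at this
    convert this using 2 with h
    abel
  have hδz : ∀ᶠ h in 𝓝[>] (0:ℝ), ‖z h - y₀‖ ≤ δ := by
    have := hz (Metric.closedBall_mem_nhds y₀ hδ)
    filter_upwards [this] with h hh
    simpa [Metric.mem_closedBall, dist_eq_norm] using hh
  -- main estimate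
  have hmain : ∀ᶠ h in 𝓝[>] (0:ℝ), ‖C y₀ + C (z h)‖ ≤ A * h := by
    have hIoc : Ioc (0:ℝ) h₀ ∈ 𝓝[>] (0:ℝ) := Ioc_mem_nhdsGT_of_mem ⟨le_refl 0, hh₀pos⟩
    filter_upwards [hIoc, hδz] with h hh hzδ
    obtain ⟨hhpos, hhh₀⟩ := hh
    have hle1 : h ≤ 1 := hhh₀.trans (min_le_left _ _)
    have hleδ : h ≤ δ := hhh₀.trans (le_trans (min_le_right _ _) (min_le_left _ _))
    have hleτ : h ≤ τ := hhh₀.trans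
      (le_trans (min_le_right _ _) (le_trans (min_le_right _ _) (min_le_left _ _)))
    have hleM : h ≤ 1/(4*M) := hhh₀.trans
      (le_trans (min_le_right _ _) (le_trans (min_le_right _ _)
        (le_trans (min_le_right _ _) (min_le_left _ _))))
    have hlec : h ≤ 3/(4*c₂) := hhh₀.trans
      (le_trans (min_le_right _ _) (le_trans (min_le_right _ _)
        (le_trans (min_le_right _ _) (min_le_right _ _))))
    have hpow : (0:ℝ) < h ^ (p + 1) := by positivity
    set b : ℝ := c₂ * h ^ (p + 1) with hbdef
    have hbpos : 0 < b := by positivity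
    have h2b : 2 * b ≤ 3/2 := by
      have h1 : h ^ (p + 1) ≤ h := by
        calc h ^ (p + 1) ≤ h ^ 1 := pow_le_pow_of_le_one hhpos.le hle1 (by omega)
          _ = h := pow_one h
      have h2 : c₂ * h ≤ 3/4 := by
        rw [le_div_iff₀ (by positivity : (0:ℝ) < 4 * c₂)] at hlec
        nlinarith
      nlinarith
    set zh := z h with hzhdef
    set w : ℝ → (Fin n → ℝ) := fun t => φ t zh - φ (t - h) y₀ with hwdef
    set w' : ℝ → (Fin n → ℝ) := fun t => f (φ t zh) - f (φ (t - h) y₀) with hw'def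
    have hw : ∀ t, HasDerivAt w (w' t) t := by
      intro t
      have hu : HasDerivAt (fun t => φ t zh) (f (φ t zh)) t := hφ t zh
      have hv : HasDerivAt (fun t : ℝ => φ (t - h) y₀) (f (φ (t - h) y₀)) t := by
        have h1 := hφ (t - h) y₀
        have h2 : HasDerivAt (fun t : ℝ => t - h) 1 t := (hasDerivAt_id t).sub_const h
        have := h1.scomp t h2
        rw [one_smul] at this
        exact this
      exact hu.sub hv
    have hvmem : ∀ t ∈ Icc (0:ℝ) h, ‖φ (t - h) y₀ - y₀‖ ≤ 1/2 := by
      intro t ht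
      apply hτ
      rw [abs_le]
      constructor <;> linarith [ht.1, ht.2, hleτ, hτpos]
    have hbdd : ∀ t ∈ Icc (0:ℝ) h, ‖w t‖ ≤ 2 * b → ‖w' t‖ ≤ M * (2 * b) := by
      intro t ht hwt
      have hv2 : φ (t - h) y₀ ∈ closedBall y₀ 2 := by
        rw [Metric.mem_closedBall, dist_eq_norm]
        linarith [hvmem t ht]
      have hu2 : φ t zh ∈ closedBall y₀ 2 := by
        rw [Metric.mem_closedBall, dist_eq_norm]
        have : ‖φ t zh - y₀‖ ≤ ‖w t‖ + ‖φ (t - h) y₀ - y₀‖ := by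
          calc ‖φ t zh - y₀‖ = ‖w t + (φ (t - h) y₀ - y₀)‖ := by
                rw [hwdef]; congr 1; exact (sub_add_sub_cancel _ _ _).symm
            _ ≤ ‖w t‖ + ‖φ (t - h) y₀ - y₀‖ := norm_add_le _ _
        linarith [hvmem t ht]
      calc ‖w' t‖ ≤ M * ‖φ t zh - φ (t - h) y₀‖ := hlip _ hu2 _ hv2
        _ = M * ‖w t‖ := rfl
        _ ≤ M * (2 * b) := mul_le_mul_of_nonneg_left hwt hMpos.le
    have hw0 : w 0 = zh - φ (-h) y₀ := by
      rw [hwdef]; simp [hφ0, zero_sub]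
    have h0lt : ‖w 0‖ < b := by rw [hw0]; exact hebound h hhpos hhh₀
    have hMh : M * h ≤ 1/4 := by
      rw [le_div_iff₀ (by positivity : (0:ℝ) < 4 * M)] at hleM
      nlinarith
    have hfin := gron_aux w w' h M b hhpos hbpos hMpos hw hbdd h0lt hMh
    have hwh : w h = φ h zh - y₀ := by
      rw [hwdef]; simp [hφ0]
    -- second error estimate
    have he2 : ‖y₀ - φ h zh - h ^ (p + 1) • C zh‖ ≤ K' * h ^ (p + 2) := by
      have := hest' h zh (by rw [abs_of_pos hhpos]; exact hleδ) hzδ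
      rw [hzhdef, hzdef] at this ⊢
      rw [hsymm h y₀] at this
      rwa [abs_of_pos hhpos] at this
    have hneg : (-h) ^ (p + 1) = h ^ (p + 1) := hpe.neg_pow h
    have keyeq : (h:ℝ) ^ (p + 1) • (C zh + C y₀) =
        (h ^ (p + 1) • C zh - (y₀ - φ h zh)) + (-(φ h zh - y₀ - (w 0)))
          + ((-h) ^ (p + 1) • C y₀ - w 0) := by
      rw [hneg, smul_add]; abel
    have ht1 : ‖h ^ (p + 1) • C zh - (y₀ - φ h zh)‖ ≤ K' * h ^ (p + 2) := by
      rw [← norm_neg]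
      have : -(h ^ (p + 1) • C zh - (y₀ - φ h zh)) = y₀ - φ h zh - h ^ (p + 1) • C zh := by abel
      rw [this]
      exact he2
    have ht2 : ‖-(φ h zh - y₀ - w 0)‖ ≤ M * (2 * b) * h := by
      rw [norm_neg, ← hwh]
      exact hfin
    have ht3 : ‖(-h) ^ (p + 1) • C y₀ - w 0‖ ≤ K' * h ^ (p + 2) := by
      rw [norm_sub_rev, hw0]
      exact he1 h hhpos hhh₀
    have htot : ‖(h:ℝ) ^ (p + 1) • (C zh + C y₀)‖ ≤ A * h ^ (p + 2) := by
      rw [keyeq]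
      calc ‖_ + _ + _‖ ≤ ‖(h ^ (p + 1) • C zh - (y₀ - φ h zh)) + (-(φ h zh - y₀ - w 0))‖
            + ‖(-h) ^ (p + 1) • C y₀ - w 0‖ := norm_add_le _ _
        _ ≤ ‖h ^ (p + 1) • C zh - (y₀ - φ h zh)‖ + ‖-(φ h zh - y₀ - w 0)‖
            + ‖(-h) ^ (p + 1) • C y₀ - w 0‖ := by
              have := norm_add_le (h ^ (p + 1) • C zh - (y₀ - φ h zh)) (-(φ h zh - y₀ - w 0))
              linarith
        _ ≤ K' * h ^ (p + 2) + M * (2 * b) * h + K' * h ^ (p + 2) := by linarith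
        _ = A * h ^ (p + 2) := by rw [hAdef, hbdef]; ring
    have hnorm : ‖(h:ℝ) ^ (p + 1) • (C zh + C y₀)‖ = h ^ (p + 1) * ‖C zh + C y₀‖ := by
      rw [norm_smul, Real.norm_eq_abs, abs_pow, abs_of_pos hhpos]
    rw [hnorm] at htot
    have : h ^ (p + 1) * ‖C zh + C y₀‖ ≤ h ^ (p + 1) * (A * h) := by
      calc h ^ (p + 1) * ‖C zh + C y₀‖ ≤ A * h ^ (p + 2) := htot
        _ = h ^ (p + 1) * (A * h) := by ring
    have hfinal : ‖C zh + C y₀‖ ≤ A * h := le_of_mul_le_mul_left (by linarith [this]) hpow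
    rwa [add_comm] at hfinal
  -- take limits
  have hAlim : Filter.Tendsto (fun h : ℝ => A * h) (𝓝[>] (0:ℝ)) (𝓝 0) := by
    have : Filter.Tendsto (fun h : ℝ => A * h) (𝓝 0) (𝓝 (A * 0)) :=
      (continuous_const.mul continuous_id).tendsto 0
    rw [mul_zero] at this
    exact this.mono_left nhdsWithin_le_nhds
  have lim2 : Filter.Tendsto (fun h : ℝ => C y₀ + C (z h)) (𝓝[>] (0:ℝ)) (𝓝 0) :=
    squeeze_zero_norm' hmain hAlim
  have lim1 : Filter.Tendsto (fun h : ℝ => C y₀ + C (z h)) (𝓝[>] (0:ℝ)) (𝓝 (C y₀ + C y₀)) :=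
    tendsto_const_nhds.add ((hC.tendsto y₀).comp hz)
  have hsum : C y₀ + C y₀ = 0 := tendsto_nhds_unique lim1 lim2
  apply hy₀
  have h2 : (2:ℝ) • C y₀ = 0 := by rw [two_smul]; exact hsum
  have := smul_eq_zero.1 h2
  rcases this with h' | h'
  · norm_num at h'
  · exact h'
end
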